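/- Let α : ℝ → ℝ be continuous with α(x) > 0 for all x, and let ρ : ℝ → ℝ be differentiable with ρ′(x) = 1/α(x) for all x and ρ(x) → ±∞ as x → ±∞. Let N_φ, N_ψ ∈ ℂ with conj(N_ψ) N_φ = 1/√(2π). Define φₙ(x) = (N_φ/√(2ⁿ n!)) Hₙ(ρ(x)/√2) e^{−ρ(x)²/2} and ψₙ(x) = (N_ψ/√(2ⁿ n!)) Hₙ(ρ(x)/√2) · (1/α(x)). Then for all n, m ≥ 0 the product conj(ψₘ) φₙ is Lebesgue integrable on ℝ and ∫_ℝ conj(ψₘ(x)) φₙ(x) dx = δ_{n,m}. -/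

import Mathlib

/-!
Substituting `y = ρ x`, whose Jacobian is exactly `1 / α`, turns the integral into
`conj N_ψ N_φ / √(n! m!) ∫ Heₙ(y) Heₘ(y) e^{-y²/2} dy`, where `Heₙ(y) = 2^{-n/2} Hₙ(y/√2)` is
the probabilists' Hermite polynomial (`Polynomial.hermite`).
Since `Heₙ₊₁ e^{-y²/2} = -(Heₙ e^{-y²/2})'`, an integration by parts gives
`∫ Heₙ₊₁ q e^{-y²/2} = ∫ Heₙ q' e^{-y²/2}` for every polynomial `q`; together with
`Heₘ₊₁' = (m + 1) Heₘ` and `∫ e^{-y²/2} = √(2π)` this yields `∫ Heₙ Heₘ e^{-y²/2} = n! √(2π) δₙₘ`.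
-/

open MeasureTheory Filter

/-- The physicist's Hermite polynomials:
`H₀(y) = 1`, `Hₙ(y) = 2y H_{n−1}(y) − H_{n−1}′(y)`. -/
noncomputable def hermiteH : ℕ → ℝ → ℝ
  | 0 => fun _ => 1
  | n + 1 => fun y => 2 * y * hermiteH n y - deriv (hermiteH n) y

open Polynomial Real

namespace Polynomial

theorem derivative_hermite_succ (n : ℕ) :
    derivative (hermite (n + 1)) = (n + 1 : ℤ[X]) * hermite n := by
  induction n with
  | zero => simp
  | succ n ih =>
    rw [hermite_succ (n + 1), derivative_sub, derivative_mul, derivative_X, ih, derivative_mul,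
      hermite_succ n]
    simp only [derivative_add, derivative_natCast, derivative_one, add_zero]
    push_cast
    ring

end Polynomial

theorem hermiteH_eq_aeval_hermite (n : ℕ) :
    hermiteH n = fun y => √2 ^ n * aeval (√2 * y) (hermite n) := by
  induction n with
  | zero => simp [hermiteH]
  | succ n ih =>
    funext y
    have hderiv :
        deriv (hermiteH n) y = √2 ^ n * (aeval (√2 * y) (derivative (hermite n)) * √2) := by
      rw [ih]
      exact (((hermite n).hasDerivAt_aeval (√2 * y)).comp y
        ((hasDerivAt_id y).const_mul √2 |>.congr_deriv (mul_one _))).const_mul _ |>.deriv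
    have hsq : √2 * √2 = 2 := mul_self_sqrt zero_le_two
    show 2 * y * hermiteH n y - deriv (hermiteH n) y = _
    rw [hderiv, ih]
    simp only [hermite_succ, map_sub, map_mul, aeval_X, pow_succ]
    linear_combination -(y * √2 ^ n * aeval (√2 * y) (hermite n)) * hsq

theorem hermiteH_div_sqrt_two_div_sqrt (n : ℕ) (y : ℝ) :
    hermiteH n (y / √2) / √(2 ^ n * n.factorial) = aeval y (hermite n) / √(n.factorial) := by
  have hsqrt_pow : √((2 : ℝ) ^ n) = √2 ^ n := by
    rw [← sq_sqrt zero_le_two, ← pow_mul, pow_mul', sqrt_sq (by positivity), sq_sqrt zero_le_two]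
  simp only [hermiteH_eq_aeval_hermite]
  rw [mul_div_cancel₀ y (by positivity), sqrt_mul (by positivity),
    hsqrt_pow, mul_div_mul_left _ _ (by positivity)]

theorem div_sqrt_mul_hermiteH_div_sqrt_two (N : ℂ) (n : ℕ) (y : ℝ) :
    N / (√(2 ^ n * n.factorial) : ℂ) * (hermiteH n (y / √2) : ℂ) =
      N * ((aeval y (hermite n) / √(n.factorial) : ℝ) : ℂ) := by
  rw [← hermiteH_div_sqrt_two_div_sqrt]
  push_cast
  ring

section GaussianMoments

variable {R : Type*} [CommRing R] [Algebra R ℝ]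

theorem integrable_aeval_mul_exp_neg_sq_div_two (p : R[X]) :
    Integrable fun x : ℝ => aeval x p * exp (-x ^ 2 / 2) := by
  simp_rw [aeval_eq_sum_range, Finset.sum_mul]
  refine integrable_finsetSum _ fun i _ => ?_
  have hmonomial : Integrable fun x : ℝ => x ^ (i : ℝ) * exp (-(1 / 2) * x ^ 2) :=
    integrable_rpow_mul_exp_neg_mul_sq (by norm_num) (by linarith [i.cast_nonneg (α := ℝ)])
  refine (hmonomial.const_mul (algebraMap R ℝ (p.coeff i))).congr (.of_forall fun x => ?_)
  simp only [rpow_natCast, Algebra.smul_def]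
  ring_nf

theorem integral_aeval_derivative_sub_X_mul_mul_exp_neg_sq_div_two (p : R[X]) :
    ∫ x : ℝ, aeval x (derivative p - X * p) * exp (-x ^ 2 / 2) = 0 := by
  refine integral_eq_zero_of_hasDerivAt_of_integrable (fun x => ?_)
    (integrable_aeval_mul_exp_neg_sq_div_two _) (integrable_aeval_mul_exp_neg_sq_div_two p)
  have hgauss : HasDerivAt (fun x : ℝ => exp (-x ^ 2 / 2)) (-x * exp (-x ^ 2 / 2)) x :=
    ((hasDerivAt_pow 2 x).fun_neg.div_const 2).exp.congr_deriv (by ring)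
  refine ((p.hasDerivAt_aeval x).fun_mul hgauss).congr_deriv ?_
  simp only [map_sub, map_mul, aeval_X]
  ring

end GaussianMoments

theorem integral_aeval_hermite_succ_mul_mul_exp_neg_sq_div_two (n : ℕ) (q : ℤ[X]) :
    ∫ x : ℝ, aeval x (hermite (n + 1) * q) * exp (-x ^ 2 / 2) =
      ∫ x : ℝ, aeval x (hermite n * derivative q) * exp (-x ^ 2 / 2) := by
  have hparts : hermite (n + 1) * q =
      hermite n * derivative q - (derivative (hermite n * q) - X * (hermite n * q)) := by
    rw [hermite_succ, derivative_mul]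
    ring
  simp only [hparts, map_sub (aeval _) (hermite n * derivative q), sub_mul]
  rw [integral_sub (integrable_aeval_mul_exp_neg_sq_div_two _)
    (integrable_aeval_mul_exp_neg_sq_div_two _),
    integral_aeval_derivative_sub_X_mul_mul_exp_neg_sq_div_two, sub_zero]

theorem integral_aeval_hermite_mul_hermite_mul_exp_neg_sq_div_two (n m : ℕ) :
    ∫ x : ℝ, aeval x (hermite n * hermite m) * exp (-x ^ 2 / 2) =
      if n = m then n.factorial * √(2 * π) else 0 := by
  induction n generalizing m with
  | zero =>
    cases m with
    | zero =>
      have hexponent : ∀ x : ℝ, -x ^ 2 / 2 = -(1 / 2) * x ^ 2 := fun x => by ring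
      simp only [hermite_zero, map_one, mul_one, one_mul, if_true, Nat.factorial_zero,
        Nat.cast_one, hexponent, integral_gaussian]
      congr 1
      ring
    | succ m =>
      rw [mul_comm, integral_aeval_hermite_succ_mul_mul_exp_neg_sq_div_two]
      simp [hermite_zero]
  | succ n ih =>
    rw [integral_aeval_hermite_succ_mul_mul_exp_neg_sq_div_two]
    cases m with
    | zero => simp [hermite_zero]
    | succ m =>
      rw [derivative_hermite_succ, mul_left_comm]
      simp only [map_mul (aeval _) ((m : ℤ[X]) + 1), map_add, map_natCast, map_one, mul_assoc,
        integral_const_mul, ih, add_left_inj]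
      split_ifs with hnm
      · subst hnm
        push_cast [Nat.factorial_succ]
        ring
      · rw [mul_zero]

section ChangeOfVariables

variable {E : Type*} [NormedAddCommGroup E] [NormedSpace ℝ E] {ρ ρ' : ℝ → ℝ}

theorem integrable_abs_deriv_smul_comp_iff (hρ : ∀ x, HasDerivAt ρ (ρ' x) x)
    (hbij : Function.Bijective ρ) (g : ℝ → E) :
    Integrable (fun x => |ρ' x| • g (ρ x)) ↔ Integrable g := by
  have h := integrableOn_image_iff_integrableOn_abs_deriv_smul MeasurableSet.univ
    (fun x _ => (hρ x).hasDerivWithinAt) hbij.injective.injOn g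
  rwa [Set.image_univ, hbij.surjective.range_eq, integrableOn_univ, integrableOn_univ,
    Iff.comm] at h

theorem integral_abs_deriv_smul_comp (hρ : ∀ x, HasDerivAt ρ (ρ' x) x)
    (hbij : Function.Bijective ρ) (g : ℝ → E) :
    ∫ x, |ρ' x| • g (ρ x) = ∫ y, g y := by
  have h := integral_image_eq_integral_abs_deriv_smul MeasurableSet.univ
    (fun x _ => (hρ x).hasDerivWithinAt) hbij.injective.injOn g
  rwa [Set.image_univ, hbij.surjective.range_eq, setIntegral_univ, setIntegral_univ,
    eq_comm] at h

end ChangeOfVariables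

theorem stmt8_general (α : ℝ → ℝ) (hαpos : ∀ x : ℝ, 0 < α x)
    (ρ : ℝ → ℝ) (hρ : Differentiable ℝ ρ) (hρ' : ∀ x : ℝ, deriv ρ x = 1 / α x)
    (hρtop : Tendsto ρ atTop atTop) (hρbot : Tendsto ρ atBot atBot)
    (Nφ Nψ : ℂ) (hN : (starRingEnd ℂ) Nψ * Nφ = (Real.sqrt (2 * Real.pi) : ℂ)⁻¹)
    (φ ψ : ℕ → ℝ → ℂ)
    (hφdef : ∀ n : ℕ, φ n = fun x =>
      Nφ / (Real.sqrt (2 ^ n * n.factorial) : ℂ)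
        * (hermiteH n (ρ x / Real.sqrt 2) : ℂ) * (Real.exp (-(ρ x) ^ 2 / 2) : ℂ))
    (hψdef : ∀ n : ℕ, ψ n = fun x =>
      Nψ / (Real.sqrt (2 ^ n * n.factorial) : ℂ)
        * (hermiteH n (ρ x / Real.sqrt 2) : ℂ) * (1 / (α x : ℂ))) :
    ∀ n m : ℕ,
      Integrable (fun x : ℝ => (starRingEnd ℂ) (ψ m x) * φ n x) volume ∧
      ∫ x : ℝ, (starRingEnd ℂ) (ψ m x) * φ n x = if n = m then 1 else 0 := by
  intro n m
  have hderiv : ∀ x, HasDerivAt ρ (1 / α x) x := fun x => hρ' x ▸ (hρ x).hasDerivAt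
  have hbij : Function.Bijective ρ :=
    ⟨(strictMono_of_deriv_pos fun x => hρ' x ▸ one_div_pos.2 (hαpos x)).injective,
      hρ.continuous.surjective hρtop hρbot⟩
  set c : ℂ := (starRingEnd ℂ) Nψ * Nφ * ((√(n.factorial) * √(m.factorial))⁻¹ : ℝ) with hc
  set u : ℝ → ℝ := fun y => aeval y (hermite n * hermite m) * exp (-y ^ 2 / 2) with hu
  have hproduct : (fun x => (starRingEnd ℂ) (ψ m x) * φ n x) = fun x =>
      |1 / α x| • (c * (u (ρ x) : ℂ)) := by
    funext x
    simp only [hψdef, hφdef, abs_of_pos (one_div_pos.2 (hαpos x)),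
      div_sqrt_mul_hermiteH_div_sqrt_two, map_mul, map_div₀,
      Complex.conj_ofReal, hc, hu, map_one, Complex.real_smul]
    push_cast
    field_simp
  rw [hproduct]
  refine ⟨(integrable_abs_deriv_smul_comp_iff hderiv hbij _).2
    ((integrable_aeval_mul_exp_neg_sq_div_two _).ofReal.const_mul c), ?_⟩
  rw [integral_abs_deriv_smul_comp hderiv hbij (fun y => c * (u y : ℂ)), integral_const_mul,
    integral_complex_ofReal, integral_aeval_hermite_mul_hermite_mul_exp_neg_sq_div_two]
  split_ifs with hnm
  · subst hnm
    rw [hc, hN, mul_self_sqrt n.factorial.cast_nonneg]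
    push_cast
    field_simp [n.factorial_ne_zero]
  · simp

/-- compatibility and biorthonormality of the families
`φₙ = (N_φ/√(2ⁿn!)) Hₙ(ρ/√2) e^{−ρ²/2}` and `ψₙ = (N_ψ/√(2ⁿn!)) Hₙ(ρ/√2)/α`. -/
theorem stmt8 (α : ℝ → ℝ) (hαc : Continuous α) (hαpos : ∀ x : ℝ, 0 < α x)
    (ρ : ℝ → ℝ) (hρ : Differentiable ℝ ρ) (hρ' : ∀ x : ℝ, deriv ρ x = 1 / α x)
    (hρtop : Tendsto ρ atTop atTop) (hρbot : Tendsto ρ atBot atBot)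
    (Nφ Nψ : ℂ) (hN : (starRingEnd ℂ) Nψ * Nφ = (Real.sqrt (2 * Real.pi) : ℂ)⁻¹)
    (φ ψ : ℕ → ℝ → ℂ)
    (hφdef : ∀ n : ℕ, φ n = fun x =>
      Nφ / (Real.sqrt (2 ^ n * n.factorial) : ℂ)
        * (hermiteH n (ρ x / Real.sqrt 2) : ℂ) * (Real.exp (-(ρ x) ^ 2 / 2) : ℂ))
    (hψdef : ∀ n : ℕ, ψ n = fun x =>
      Nψ / (Real.sqrt (2 ^ n * n.factorial) : ℂ)
        * (hermiteH n (ρ x / Real.sqrt 2) : ℂ) * (1 / (α x : ℂ))) :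
    ∀ n m : ℕ,
      Integrable (fun x : ℝ => (starRingEnd ℂ) (ψ m x) * φ n x) volume ∧
      ∫ x : ℝ, (starRingEnd ℂ) (ψ m x) * φ n x = if n = m then 1 else 0 :=
  stmt8_general α hαpos ρ hρ hρ' hρtop hρbot Nφ Nψ hN φ ψ hφdef hψdef
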